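/- arXiv:2105.06144 — 4 statements merged into one kernel-verified Lean document; each statement's English description precedes it below -/
import Mathlib

section
/- The induced matching number of the bipartite Kneser graph H(m,k) is at least C(2k,k). -/
/-!
Fix a `2k`-set `S ⊆ [m]`. For each `k`-subset `A ⊆ S` take the edge `A ⊆ A ∪ Sᶜ`; the
right-hand side has `k + (m - 2k) = m - k` elements. For distinct `A, A'` of this kind,
`A ⊆ A' ∪ Sᶜ` would force `A ⊆ A'`, hence `A = A'` as both have `k` elements, so these
`C(2k,k)` edges form an induced matching.
-/

open Finset

/-- Vertex type of the bipartite Kneser graph: `k`-subsets of `[m]` on the left,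
`(m-k)`-subsets on the right. -/
abbrev KVert (m k : ℕ) :=
  {A : Finset (Fin m) // A.card = k} ⊕ {B : Finset (Fin m) // B.card = m - k}

def bkAdj (m k : ℕ) : KVert m k → KVert m k → Prop
  | Sum.inl A, Sum.inr B => A.1 ⊆ B.1
  | Sum.inr B, Sum.inl A => A.1 ⊆ B.1
  | _, _ => False

/-- The bipartite Kneser graph `H(m,k)`. -/
def HBK (m k : ℕ) : SimpleGraph (KVert m k) where
  Adj := bkAdj m k
  symm := by
    constructor
    intro u v h
    cases u <;> cases v <;> simp_all [bkAdj]
  loopless := by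
    constructor
    intro u
    cases u <;> simp [bkAdj]

instance (m k : ℕ) : DecidableRel (HBK m k).Adj := fun a b =>
  match a, b with
  | Sum.inl A, Sum.inr B => inferInstanceAs (Decidable (A.1 ⊆ B.1))
  | Sum.inr B, Sum.inl A => inferInstanceAs (Decidable (A.1 ⊆ B.1))
  | Sum.inl _, Sum.inl _ => inferInstanceAs (Decidable False)
  | Sum.inr _, Sum.inr _ => inferInstanceAs (Decidable False)

namespace Finset

variable {α : Type*} [Fintype α] [DecidableEq α] {A B S : Finset α}

theorem subset_of_subset_union_compl (hA : A ⊆ S) (h : A ⊆ B ∪ Sᶜ) : A ⊆ B :=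
  fun _ hx => (mem_union.1 (h hx)).resolve_right (notMem_compl.2 (hA hx))

theorem union_compl_inter_of_subset (hA : A ⊆ S) : (A ∪ Sᶜ) ∩ S = A := by
  rw [union_inter_distrib_right, inter_comm Sᶜ, inter_compl, union_empty, inter_eq_left.2 hA]

theorem card_union_compl_of_subset (hA : A ⊆ S) :
    #(A ∪ Sᶜ) = #A + (Fintype.card α - #S) := by
  rw [card_union_of_disjoint (disjoint_compl_right.mono_left hA), card_compl]

end Finset

theorem card_union_compl_of_mem_powersetCard {m k : ℕ} {A S : Finset (Fin m)}
    (hS : #S = 2 * k) (hA : A ∈ S.powersetCard k) : #(A ∪ Sᶜ) = m - k := by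
  obtain ⟨hAS, hAk⟩ := mem_powersetCard.1 hA
  have : #S ≤ m := by simpa using card_le_univ S
  rw [card_union_compl_of_subset hAS, hAk, Fintype.card_fin]
  omega

section PairedEdge

variable {m k : ℕ} (S : Finset (Fin m)) (hS : #S = 2 * k)

def pairedEdge (A : S.powersetCard k) : KVert m k × KVert m k :=
  (Sum.inl ⟨A, (mem_powersetCard.1 A.2).2⟩,
    Sum.inr ⟨A ∪ Sᶜ, card_union_compl_of_mem_powersetCard hS A.2⟩)

theorem pairedEdge_fst_injective : Function.Injective fun A => (pairedEdge S hS A).1 :=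
  fun _ _ h => Subtype.ext (by simpa [pairedEdge] using h)

theorem pairedEdge_snd_injective : Function.Injective fun A => (pairedEdge S hS A).2 := by
  intro A A' h
  have h' : (A : Finset (Fin m)) ∪ Sᶜ = (A' : Finset (Fin m)) ∪ Sᶜ := by
    simpa [pairedEdge] using h
  apply Subtype.ext
  rw [← union_compl_inter_of_subset (mem_powersetCard.1 A.2).1,
    ← union_compl_inter_of_subset (mem_powersetCard.1 A'.2).1, h']

theorem adj_pairedEdge (A : S.powersetCard k) :
    (HBK m k).Adj (pairedEdge S hS A).1 (pairedEdge S hS A).2 :=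
  subset_union_left

theorem not_adj_pairedEdge_of_ne {A A' : S.powersetCard k} (h : A ≠ A') :
    ¬ (HBK m k).Adj (pairedEdge S hS A).1 (pairedEdge S hS A').2 := by
  intro hsub
  obtain ⟨hAS, hAk⟩ := mem_powersetCard.1 A.2
  have hAA' : (A : Finset (Fin m)) ⊆ A' := subset_of_subset_union_compl hAS hsub
  exact h (Subtype.ext (eq_of_subset_of_card_le hAA' (by rw [hAk, (mem_powersetCard.1 A'.2).2])))

theorem pairedEdge_far_of_ne {A A' : S.powersetCard k} (h : A ≠ A') :
    let e := pairedEdge S hS A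
    let e' := pairedEdge S hS A'
    e.1 ≠ e'.1 ∧ e.1 ≠ e'.2 ∧ e.2 ≠ e'.1 ∧ e.2 ≠ e'.2 ∧
      ¬ (HBK m k).Adj e.1 e'.1 ∧ ¬ (HBK m k).Adj e.1 e'.2 ∧
      ¬ (HBK m k).Adj e.2 e'.1 ∧ ¬ (HBK m k).Adj e.2 e'.2 :=
  ⟨(pairedEdge_fst_injective S hS).ne h, Sum.inl_ne_inr, Sum.inr_ne_inl,
    (pairedEdge_snd_injective S hS).ne h, not_false, not_adj_pairedEdge_of_ne S hS h,
    fun hadj => not_adj_pairedEdge_of_ne S hS h.symm hadj.symm, not_false⟩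

end PairedEdge

theorem inducedMatchingNumber_ge_general (m k : ℕ) (hm : 2 * k ≤ m) :
    ∃ M : Finset (KVert m k × KVert m k),
      M.card = (2 * k).choose k ∧
      (∀ e ∈ M, (HBK m k).Adj e.1 e.2) ∧
      (∀ e ∈ M, ∀ e' ∈ M, e ≠ e' →
        e.1 ≠ e'.1 ∧ e.1 ≠ e'.2 ∧ e.2 ≠ e'.1 ∧ e.2 ≠ e'.2 ∧
        ¬ (HBK m k).Adj e.1 e'.1 ∧ ¬ (HBK m k).Adj e.1 e'.2 ∧
        ¬ (HBK m k).Adj e.2 e'.1 ∧ ¬ (HBK m k).Adj e.2 e'.2) := by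
  obtain ⟨S, -, hS⟩ := exists_subset_card_eq (s := (univ : Finset (Fin m))) (by simpa using hm)
  refine ⟨univ.image (pairedEdge S hS), ?_, ?_, ?_⟩
  · rw [card_image_of_injective _ (pairedEdge_fst_injective S hS).of_comp, card_univ,
      Fintype.card_coe, card_powersetCard, hS]
  · simp only [mem_image, mem_univ, true_and]
    rintro _ ⟨A, rfl⟩
    exact adj_pairedEdge S hS A
  · simp only [mem_image, mem_univ, true_and]
    rintro _ ⟨A, rfl⟩ _ ⟨A', rfl⟩ hne
    exact pairedEdge_far_of_ne S hS (ne_of_apply_ne _ hne)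

/-- The induced matching number of the bipartite Kneser graph `H(m,k)` is at least
`C(2k,k)`: there is a set of `C(2k,k)` edges that is pairwise 3-disjoint. -/
theorem inducedMatchingNumber_ge (m k : ℕ) (hk : 1 ≤ k) (hm : 2 * k ≤ m) :
    ∃ M : Finset (KVert m k × KVert m k),
      M.card = (2 * k).choose k ∧
      (∀ e ∈ M, (HBK m k).Adj e.1 e.2) ∧
      (∀ e ∈ M, ∀ e' ∈ M, e ≠ e' →
        e.1 ≠ e'.1 ∧ e.1 ≠ e'.2 ∧ e.2 ≠ e'.1 ∧ e.2 ≠ e'.2 ∧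
        ¬ (HBK m k).Adj e.1 e'.1 ∧ ¬ (HBK m k).Adj e.1 e'.2 ∧
        ¬ (HBK m k).Adj e.2 e'.1 ∧ ¬ (HBK m k).Adj e.2 e'.2) :=
  inducedMatchingNumber_ge_general m k hm
end

section
/- Let m > 2k, T ⊆ [m] with |T| = m−2k+1, W the set of k-subsets disjoint from T together with the (m−k)-subsets containing T. Then W is an independent set in H(m,k) of cardinality 2·C(2k−1,k−1) = C(2k,k). -/
open Finset

/-- Membership in the set `W`: left vertices (k-subsets) disjoint from `T`, right
vertices ((m-k)-subsets) containing `T`. -/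
def inW (m k : ℕ) (T : Finset (Fin m)) : KVert m k → Prop :=
  Sum.elim (fun A => Disjoint A.1 T) (fun B => T ⊆ B.1)

instance (m k : ℕ) (T : Finset (Fin m)) : DecidablePred (inW m k T) := fun v =>
  match v with
  | Sum.inl A => inferInstanceAs (Decidable (Disjoint A.1 T))
  | Sum.inr B => inferInstanceAs (Decidable (T ⊆ B.1))

/-! A `k`-set disjoint from `T` and an `(m-k)`-set containing `T` are never nested: their
union would have `k + (m-2k+1) > m-k` elements. Each half of `W` is in bijection with the
`k`-subsets of the `(2k-1)`-element set `Tᶜ` (the right half via complementation), so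
`|W| = 2·C(2k-1,k) = 2·C(2k-1,k-1) = C(2k,k)`. -/

theorem Finset.card_add_card_le_of_disjoint_of_subset {α : Type*} [DecidableEq α]
    {A B T : Finset α} (hA : Disjoint A T) (hT : T ⊆ B) (hAB : A ⊆ B) : #A + #T ≤ #B :=
  card_union_of_disjoint hA ▸ card_le_card (union_subset hAB hT)

theorem Finset.card_filter_univ_sum {α β : Type*} [Fintype α] [Fintype β]
    (r : α ⊕ β → Prop) [DecidablePred r] :
    #(univ.filter r) = #(univ.filter (r ∘ Sum.inl)) + #(univ.filter (r ∘ Sum.inr)) := by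
  simp only [card_filter, Fintype.sum_sum_type, Function.comp_apply]

section
variable {α : Type*} [Fintype α] [DecidableEq α]

theorem Finset.card_filter_disjoint (T : Finset α) (k : ℕ) :
    #(univ.filter fun A : {A : Finset α // #A = k} => Disjoint A.1 T) = (#Tᶜ).choose k := by
  rw [← card_powersetCard, ← card_map (Function.Embedding.subtype _)]
  congr 1
  ext S
  simp [mem_powersetCard, subset_compl_iff_disjoint_right, and_comm]

theorem Finset.card_filter_superset (T : Finset α) {n k : ℕ} (hn : Fintype.card α = n)
    (hk : k ≤ n) :
    #(univ.filter fun B : {B : Finset α // #B = n - k} => T ⊆ B.1) = (#Tᶜ).choose k := by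
  rw [← card_powersetCard, ← card_map (Function.Embedding.subtype _),
    ← card_map ⟨compl, compl_injective⟩]
  congr 1
  ext S
  simp only [mem_map, mem_filter, mem_univ, true_and, Function.Embedding.subtype_apply,
    Subtype.exists, exists_and_left, exists_prop, exists_eq_right_right,
    Function.Embedding.coeFn_mk, mem_powersetCard]
  constructor
  · rintro ⟨B, ⟨hTB, hB⟩, rfl⟩
    exact ⟨compl_subset_compl.2 hTB, by rw [card_compl, hB]; omega⟩
  · rintro ⟨hST, hS⟩
    exact ⟨Sᶜ, ⟨subset_compl_comm.1 hST, by rw [card_compl]; omega⟩, compl_compl S⟩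

end

theorem Nat.choose_two_mul_succ (n : ℕ) :
    (2 * (n + 1)).choose (n + 1) = 2 * (2 * n + 1).choose n := by
  rw [show 2 * (n + 1) = 2 * n + 1 + 1 by ring, Nat.choose_succ_succ, Nat.choose_symm_half]
  ring

theorem HBK_not_adj_of_inW {m k : ℕ} {T : Finset (Fin m)} (hT : #T = m - 2 * k + 1)
    {v w : KVert m k} (hv : inW m k T v) (hw : inW m k T w) : ¬ (HBK m k).Adj v w := by
  have key (A : {A : Finset (Fin m) // #A = k}) (B : {B : Finset (Fin m) // #B = m - k})
      (hA : Disjoint A.1 T) (hB : T ⊆ B.1) : ¬ A.1 ⊆ B.1 := fun hAB => by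
    have := card_add_card_le_of_disjoint_of_subset hA hB hAB
    rw [A.2, B.2, hT] at this
    omega
  rcases v with A | B <;> rcases w with A' | B'
  · exact fun h => h
  · exact key A B' hv hw
  · exact key A' B hw hv
  · exact fun h => h

/-- For `m > 2k` and `T ⊆ [m]` with `|T| = m-2k+1`, the set `W` of `k`-subsets disjoint
from `T` together with the `(m-k)`-subsets containing `T` is an independent set of
`H(m,k)` of cardinality `2·C(2k-1,k-1) = C(2k,k)`. -/
theorem W_independent (m k : ℕ) (hk : 1 ≤ k) (hm : 2 * k < m)
    (T : Finset (Fin m)) (hT : T.card = m - 2 * k + 1) :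
    (∀ v ∈ Finset.univ.filter (inW m k T), ∀ w ∈ Finset.univ.filter (inW m k T),
        ¬ (HBK m k).Adj v w) ∧
    (Finset.univ.filter (inW m k T)).card = 2 * (2 * k - 1).choose (k - 1) ∧
    (Finset.univ.filter (inW m k T)).card = (2 * k).choose k := by
  obtain ⟨n, rfl⟩ : ∃ n, k = n + 1 := ⟨k - 1, by omega⟩
  have hTc : #Tᶜ = 2 * n + 1 := by rw [card_compl, Fintype.card_fin, hT]; omega
  have hcard : #(univ.filter (inW m (n + 1) T)) = 2 * (2 * n + 1).choose n := by
    rw [card_filter_univ_sum]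
    show #(univ.filter fun A : {A : Finset (Fin m) // #A = n + 1} => Disjoint A.1 T) +
      #(univ.filter fun B : {B : Finset (Fin m) // #B = m - (n + 1)} => T ⊆ B.1) = _
    rw [card_filter_disjoint, card_filter_superset T (Fintype.card_fin m) (by omega), hTc,
      Nat.choose_symm_half]
    ring
  refine ⟨fun v hv w hw => HBK_not_adj_of_inW hT (mem_filter.1 hv).2 (mem_filter.1 hw).2,
    ?_, ?_⟩
  · simpa [mul_add] using hcard
  · rw [hcard, Nat.choose_two_mul_succ]
end

section
/- The independent domination number of the bipartite Kneser graph H(m,k) satisfies i(H(m,k)) ≤ C(2k,k) for all m ≥ 2k. -/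
open Finset

/-!
Fix a `2k`-set `X` and a point `z ∈ X`, and take one vertex for each `k`-subset `C` of `X`:
`C` itself on the left if `z ∉ C`, and `Xᶜ ∪ C` on the right if `z ∈ C`. An edge `C ⊆ Xᶜ ∪ D`
between two of them would force `C = D`, so the set is independent. A left vertex `A` outside it
lies below `Xᶜ ∪ C` for any `k`-set `C ⊆ X` containing `(A ∩ X) ∪ {z}`. A right vertex `B`
outside it meets `X \ {z}` in at least `k` points, because `|B \ X| ≤ m - 2k` with strict
inequality unless `Xᶜ ⊆ B`.
-/

section Finsets

variable {α : Type*} [DecidableEq α] {A B C X : Finset α} {z : α} {k : ℕ}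

lemma not_subset_of_card_inter_le (hAX : A ⊆ X) (hzA : z ∉ A) (hz : z ∈ X) (hzB : z ∈ B)
    (hcard : #(B ∩ X) ≤ #A) : ¬A ⊆ B := fun hAB => by
  have hA : A = B ∩ X := eq_of_subset_of_card_le (subset_inter hAB hAX) hcard
  exact hzA (hA ▸ mem_inter.2 ⟨hzB, hz⟩)

lemma exists_superset_inter_of_not_subset (hkX : k ≤ #X) (hz : z ∈ X) (hA : #A = k)
    (h : ¬(A ⊆ X ∧ z ∉ A)) : ∃ C ⊆ X, #C = k ∧ z ∈ C ∧ A ∩ X ⊆ C := by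
  have hcard : #(insert z (A ∩ X)) ≤ k := by
    by_cases hzA : z ∈ A ∩ X
    · rw [insert_eq_of_mem hzA, ← hA]
      exact card_le_card inter_subset_left
    · have hAX : A ∩ X ≠ A := fun hAX =>
        h ⟨inter_eq_left.1 hAX, fun hzA' => hzA (mem_inter.2 ⟨hzA', hz⟩)⟩
      rw [card_insert_of_notMem hzA, ← hA]
      exact card_lt_card (inter_subset_left.ssubset_of_ne hAX)
  obtain ⟨C, hzC, hCX, hC⟩ :=
    exists_subsuperset_card_eq (insert_subset hz inter_subset_right) hcard hkX
  exact ⟨C, hCX, hC, hzC (mem_insert_self _ _), (subset_insert _ _).trans hzC⟩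

variable [Fintype α]

lemma card_inter_eq_of_compl_subset (hB : #B = Fintype.card α - k) (hX : #X = 2 * k)
    (hk : 2 * k ≤ Fintype.card α) (h : Xᶜ ⊆ B) : #(B ∩ X) = k := by
  have hsplit := card_inter_add_card_sdiff B X
  rw [sdiff_eq_inter_compl, inter_eq_right.2 h, card_compl, hB, hX] at hsplit
  omega

lemma compl_union_inter_eq (h : Xᶜ ⊆ B) : Xᶜ ∪ B ∩ X = B := by
  calc Xᶜ ∪ B ∩ X = B \ X ∪ B ∩ X := by rw [sdiff_eq_inter_compl, inter_eq_right.2 h]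
    _ = B := sdiff_union_inter B X

lemma card_compl_union_of_subset (hCX : C ⊆ X) : #(Xᶜ ∪ C) = Fintype.card α - #X + #C := by
  rw [card_union_of_disjoint (disjoint_compl_left.mono_right hCX), card_compl]

lemma subset_compl_union_of_inter_subset (h : A ∩ X ⊆ C) : A ⊆ Xᶜ ∪ C := by
  intro a ha
  by_cases haX : a ∈ X
  · exact mem_union_right _ (h (mem_inter.2 ⟨ha, haX⟩))
  · exact mem_union_left _ (mem_compl.2 haX)

lemma le_card_inter_erase (hcard : Fintype.card α + k ≤ #B + #X) (h : ¬(Xᶜ ⊆ B ∧ z ∈ B)) :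
    k ≤ #((B ∩ X).erase z) := by
  have hsplit := card_inter_add_card_sdiff B X
  have hsdiff : B \ X ⊆ Xᶜ := by
    rw [sdiff_eq_inter_compl]
    exact inter_subset_right
  have hXc := card_compl X
  have hXle := card_le_univ X
  by_cases hzB : z ∈ B
  · have hlt : #(B \ X) < #Xᶜ :=
      card_lt_card (hsdiff.ssubset_of_ne fun heq => h ⟨heq ▸ sdiff_subset, hzB⟩)
    have := pred_card_le_card_erase (s := B ∩ X) (a := z)
    omega
  · rw [erase_eq_of_notMem fun hz => hzB (mem_inter.1 hz).1]
    have := card_le_card hsdiff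
    omega

end Finsets

section Witness

variable {m k : ℕ} {X : Finset (Fin m)} {z : Fin m}

def indepDominatingSet (X : Finset (Fin m)) (z : Fin m) : Finset (KVert m k) :=
  ({A | A.1 ⊆ X ∧ z ∉ A.1} : Finset _).disjSum {B | Xᶜ ⊆ B.1 ∧ z ∈ B.1}

@[simp]
lemma inl_mem_indepDominatingSet {A : {A : Finset (Fin m) // #A = k}} :
    Sum.inl A ∈ indepDominatingSet (k := k) X z ↔ A.1 ⊆ X ∧ z ∉ A.1 := by
  simp [indepDominatingSet]

@[simp]
lemma inr_mem_indepDominatingSet {B : {B : Finset (Fin m) // #B = m - k}} :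
    Sum.inr B ∈ indepDominatingSet (k := k) X z ↔ Xᶜ ⊆ B.1 ∧ z ∈ B.1 := by
  simp [indepDominatingSet]

lemma indepDominatingSet_isIndep (hX : #X = 2 * k) (hm : 2 * k ≤ m) (hz : z ∈ X) :
    ∀ v ∈ indepDominatingSet X z, ∀ w ∈ indepDominatingSet X z, ¬(HBK m k).Adj v w := by
  have key : ∀ (A : {A : Finset (Fin m) // #A = k}) (B : {B : Finset (Fin m) // #B = m - k}),
      Sum.inl A ∈ indepDominatingSet X z → Sum.inr B ∈ indepDominatingSet X z → ¬A.1 ⊆ B.1 := by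
    intro A B hA hB
    rw [inl_mem_indepDominatingSet] at hA
    rw [inr_mem_indepDominatingSet] at hB
    refine not_subset_of_card_inter_le hA.1 hA.2 hz hB.2 ?_
    rw [card_inter_eq_of_compl_subset (by simpa using B.2) hX (by simpa using hm) hB.1, A.2]
  rintro (A | B) hv (A' | B') hw hadj
  · exact hadj
  · exact key A B' hv hw hadj
  · exact key A' B hw hv hadj
  · exact hadj

lemma indepDominatingSet_dominating (hX : #X = 2 * k) (hm : 2 * k ≤ m) (hz : z ∈ X) :
    ∀ v, v ∈ indepDominatingSet X z ∨ ∃ w ∈ indepDominatingSet X z, (HBK m k).Adj v w := by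
  rintro (A | B)
  · by_cases h : A.1 ⊆ X ∧ z ∉ A.1
    · exact Or.inl (inl_mem_indepDominatingSet.2 h)
    obtain ⟨C, hCX, hC, hzC, hAC⟩ := exists_superset_inter_of_not_subset (by omega) hz A.2 h
    have hcard : #(Xᶜ ∪ C) = m - k := by
      rw [card_compl_union_of_subset hCX, Fintype.card_fin, hX, hC]
      omega
    refine Or.inr ⟨Sum.inr ⟨Xᶜ ∪ C, hcard⟩, ?_, subset_compl_union_of_inter_subset hAC⟩
    exact inr_mem_indepDominatingSet.2 ⟨subset_union_left, mem_union_right _ hzC⟩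
  · by_cases h : Xᶜ ⊆ B.1 ∧ z ∈ B.1
    · exact Or.inl (inr_mem_indepDominatingSet.2 h)
    have hB : Fintype.card (Fin m) + k ≤ #B.1 + #X := by
      rw [B.2, hX, Fintype.card_fin]
      omega
    obtain ⟨A, hAB, hA⟩ := exists_subset_card_eq (le_card_inter_erase hB h)
    refine Or.inr ⟨Sum.inl ⟨A, hA⟩, inl_mem_indepDominatingSet.2 ⟨?_, ?_⟩, ?_⟩
    · exact fun a ha => (mem_inter.1 (mem_of_mem_erase (hAB ha))).2
    · exact fun hzA => ne_of_mem_erase (hAB hzA) rfl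
    · exact fun a ha => (mem_inter.1 (mem_of_mem_erase (hAB ha))).1

def traceIn (X : Finset (Fin m)) : KVert m k → Finset (Fin m) :=
  Sum.elim Subtype.val fun B => B.1 ∩ X

lemma mapsTo_traceIn (hX : #X = 2 * k) (hm : 2 * k ≤ m) :
    Set.MapsTo (traceIn X) (indepDominatingSet (k := k) X z : Set (KVert m k))
      (X.powersetCard k) := by
  rintro (A | B) hv <;> rw [mem_coe] at hv ⊢
  · rw [inl_mem_indepDominatingSet] at hv
    exact mem_powersetCard.2 ⟨hv.1, A.2⟩
  · rw [inr_mem_indepDominatingSet] at hv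
    refine mem_powersetCard.2 ⟨inter_subset_right, ?_⟩
    exact card_inter_eq_of_compl_subset (by simpa using B.2) hX (by simpa using hm) hv.1

lemma injOn_traceIn (hz : z ∈ X) :
    Set.InjOn (traceIn X) (indepDominatingSet (k := k) X z : Set (KVert m k)) := by
  have key : ∀ (A : {A : Finset (Fin m) // #A = k}) (B : {B : Finset (Fin m) // #B = m - k}),
      Sum.inl A ∈ indepDominatingSet X z → Sum.inr B ∈ indepDominatingSet X z →
      A.1 ≠ B.1 ∩ X := by
    intro A B hA hB heq
    rw [inl_mem_indepDominatingSet] at hA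
    rw [inr_mem_indepDominatingSet] at hB
    exact hA.2 (heq ▸ mem_inter.2 ⟨hB.2, hz⟩)
  rintro (A | B) hv (A' | B') hw heq <;> rw [mem_coe] at hv hw
  · exact congrArg Sum.inl (Subtype.ext heq)
  · exact (key A B' hv hw heq).elim
  · exact (key A' B hw hv heq.symm).elim
  · rw [inr_mem_indepDominatingSet] at hv hw
    refine congrArg Sum.inr (Subtype.ext ?_)
    calc B.1 = Xᶜ ∪ B.1 ∩ X := (compl_union_inter_eq hv.1).symm
      _ = Xᶜ ∪ B'.1 ∩ X := congrArg (Xᶜ ∪ ·) heq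
      _ = B'.1 := compl_union_inter_eq hw.1

lemma card_indepDominatingSet_le (hX : #X = 2 * k) (hm : 2 * k ≤ m) (hz : z ∈ X) :
    #(indepDominatingSet (k := k) X z) ≤ (2 * k).choose k := by
  calc #(indepDominatingSet (k := k) X z) ≤ #(X.powersetCard k) :=
        card_le_card_of_injOn _ (mapsTo_traceIn hX hm) (injOn_traceIn hz)
    _ = (2 * k).choose k := by rw [card_powersetCard, hX]

end Witness

/-- The independent domination number of `H(m,k)` is at most `C(2k,k)`: there is an
independent dominating set of cardinality at most `C(2k,k)`. -/
theorem independent_domination_le (m k : ℕ) (hk : 1 ≤ k) (hm : 2 * k ≤ m) :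
    ∃ W : Finset (KVert m k),
      W.card ≤ (2 * k).choose k ∧
      (∀ v ∈ W, ∀ w ∈ W, ¬ (HBK m k).Adj v w) ∧
      (∀ v : KVert m k, v ∈ W ∨ ∃ w ∈ W, (HBK m k).Adj v w) := by
  obtain ⟨X, -, hX⟩ := exists_subset_card_eq (show 2 * k ≤ #(univ : Finset (Fin m)) by simpa)
  obtain ⟨z, hz⟩ := card_pos.1 (show 0 < #X by omega)
  exact ⟨indepDominatingSet X z, card_indepDominatingSet_le hX hm hz,
    indepDominatingSet_isIndep hX hm hz, indepDominatingSet_dominating hX hm hz⟩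
end

section
/- Let m > 2k, Q ⊆ [m] with |Q| = k−1, and D the set of all (m−k)-subsets of [m] containing Q. Then no family C of at most k vertices of H(m,k) satisfies D ⊆ N(C); hence γ(D, H(m,k)) = k+1. -/
open Finset

/-- `B` is the complement of a `k`-subset of `Qᶜ` through one chosen point of each `A \ Q`. -/
theorem Finset.exists_superset_card_eq_forall_not_subset {α : Type*} [Fintype α]
    [DecidableEq α] {Q : Finset α} {𝒜 : Finset (Finset α)} {k : ℕ} (h𝒜 : ∀ A ∈ 𝒜, ¬A ⊆ Q)
    (h𝒜k : #𝒜 ≤ k) (hkQ : k ≤ #Qᶜ) :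
    ∃ B : Finset α, Q ⊆ B ∧ #B = Fintype.card α - k ∧ ∀ A ∈ 𝒜, ¬A ⊆ B := by
  choose a haA haQ using fun A hA => not_subset.1 (h𝒜 A hA)
  set T₀ := 𝒜.attach.image fun A => a A.1 A.2
  have hT₀Q : T₀ ⊆ Qᶜ := by
    simp only [T₀, image_subset_iff, mem_compl]
    exact fun A _ => haQ A.1 A.2
  have hT₀k : #T₀ ≤ k := card_image_le.trans (card_attach.trans_le h𝒜k)
  obtain ⟨T, hT₀T, hTQ, hTk⟩ := exists_subsuperset_card_eq hT₀Q hT₀k hkQ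
  refine ⟨Tᶜ, subset_compl_comm.1 hTQ, by rw [card_compl, hTk], fun A hA hAT => ?_⟩
  have haT : a A hA ∈ T := hT₀T (mem_image_of_mem _ (mem_attach _ ⟨A, hA⟩))
  exact mem_compl.1 (hAT (haA A hA)) haT

namespace HBK

variable {m k : ℕ}

theorem not_adj_inr_inr {B B' : {B : Finset (Fin m) // B.card = m - k}} :
    ¬(HBK m k).Adj (Sum.inr B') (Sum.inr B) :=
  id

theorem lt_card_of_dominates_supersets {Q : Finset (Fin m)} (hQk : #Q < k) (hkQ : k + #Q ≤ m)
    {C : Finset (KVert m k)}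
    (hC : ∀ B : {B : Finset (Fin m) // B.card = m - k}, Q ⊆ B.1 →
      ∃ x ∈ C, (HBK m k).Adj x (Sum.inr B)) :
    k < #C := by
  by_contra! hCk
  set 𝒜 := C.toLeft.image Subtype.val
  have h𝒜Q : ∀ A ∈ 𝒜, ¬A ⊆ Q := by
    simp only [𝒜, mem_image, Subtype.exists, exists_and_right, exists_eq_right,
      forall_exists_index]
    exact fun A hA _ hAQ => (card_le_card hAQ).not_gt (hA ▸ hQk)
  have h𝒜k : #𝒜 ≤ k := card_image_le.trans (card_toLeft_le.trans hCk)
  obtain ⟨B, hQB, hBk, hB𝒜⟩ :=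
    exists_superset_card_eq_forall_not_subset h𝒜Q h𝒜k
      (by rw [card_compl, Fintype.card_fin]; omega)
  rw [Fintype.card_fin] at hBk
  obtain ⟨x, hxC, hxB⟩ := hC ⟨B, hBk⟩ hQB
  rcases x with A | B'
  · exact hB𝒜 A.1 (mem_image_of_mem _ (mem_toLeft.2 hxC)) hxB
  · exact not_adj_inr_inr hxB

/-- The witnesses are the sets `Q ∪ {x}` for `k + 1` points `x ∉ Q`: a set of size `m - k` misses
only `k` points, so it contains one of these `x`. -/
theorem exists_card_eq_dominates_supersets {Q : Finset (Fin m)} (hQk : #Q + 1 = k)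
    (hkm : 2 * k ≤ m) :
    ∃ X : Finset (KVert m k), #X = k + 1 ∧
      ∀ B : {B : Finset (Fin m) // B.card = m - k}, Q ⊆ B.1 →
        ∃ x ∈ X, (HBK m k).Adj x (Sum.inr B) := by
  obtain ⟨S, hSQ, hSk⟩ :=
    exists_subset_card_eq (s := Qᶜ) (n := k + 1)
      (by rw [card_compl, Fintype.card_fin]; omega)
  have hxQ : ∀ x : S, x.1 ∉ Q := fun x => mem_compl.1 (hSQ x.2)
  let vertex : S ↪ KVert m k :=
    ⟨fun x => Sum.inl ⟨insert x.1 Q, by rw [card_insert_of_notMem (hxQ x), hQk]⟩,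
      fun x y hxy => Subtype.ext <|
        (insert_inj (hxQ x)).1 (congrArg Subtype.val (Sum.inl_injective hxy))⟩
  refine ⟨S.attach.map vertex, by rw [card_map, card_attach, hSk], fun B hQB => ?_⟩
  have hBk : #B.1ᶜ < #S := by rw [card_compl, B.2, Fintype.card_fin, hSk]; omega
  obtain ⟨x, hxS, hxB⟩ := exists_mem_notMem_of_card_lt_card hBk
  exact ⟨vertex ⟨x, hxS⟩, mem_map_of_mem _ (mem_attach _ _),
    insert_subset (notMem_compl.1 hxB) hQB⟩

end HBK

/-- For `Q ⊆ [m]` with `|Q| = k-1` and `D` the set of `(m-k)`-subsets containing `Q`: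
no family of at most `k` vertices of `H(m,k)` dominates `D`, while some family of
`k+1` vertices does; hence `γ(D, H(m,k)) = k+1`. -/
theorem gamma_D_eq (m k : ℕ) (hk : 1 ≤ k) (hm : 2 * k < m)
    (Q : Finset (Fin m)) (hQ : Q.card = k - 1) :
    (∀ C : Finset (KVert m k),
        (∀ B : {B : Finset (Fin m) // B.card = m - k}, Q ⊆ B.1 →
          ∃ x ∈ C, (HBK m k).Adj x (Sum.inr B)) → k + 1 ≤ C.card) ∧
    (∃ X : Finset (KVert m k), X.card = k + 1 ∧
        ∀ B : {B : Finset (Fin m) // B.card = m - k}, Q ⊆ B.1 →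
          ∃ x ∈ X, (HBK m k).Adj x (Sum.inr B)) :=
  ⟨fun _ hC => HBK.lt_card_of_dominates_supersets (by omega) (by omega) hC,
    HBK.exists_card_eq_dominates_supersets (by omega) (by omega)⟩
end
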